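/- Inner product of Boson Sampling output states as a single permanent (case of no adaptive measurements): Let n ≤ m be natural numbers, let t = (1^n, 0^{m−n}) ∈ Φ_{m,n}, and let M and N be m×m complex matrices. Then Σ_{s ∈ Φ_{m,n}} (1/s!) · Per(M_{t,s}) · Per(N_{s,t}) = Per[(MN)_n], where (MN)_n denotes the n×n top-left submatrix of the product MN. (Applied with M = U† and N = V for unitary interferometers U, V, this states that the inner product ⟨φ|ψ⟩ of the output states of U and V on input |1…1 0…0⟩ with n photons in m modes equals Per[(U†V)_n].) -/

import Mathlib

/-- The permanent of a (generalized square) matrix whose rows and columns are indexed by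
finite types of the same cardinality: `Per A = ∑_{σ} ∏_i a_{i, σ(i)}`, the sum ranging over
all bijections from rows to columns. For `α = β = Fin r` this is the usual permanent
`∑_{σ ∈ S_r} ∏_i a_{i σ(i)}`. -/
noncomputable def Per {α β : Type*} [Fintype α] [Fintype β] [DecidableEq α] [DecidableEq β]
    (A : Matrix α β ℂ) : ℂ :=
  ∑ f : α ≃ β, ∏ i : α, A i (f i)

/-- The matrix `M_{u,v}` obtained from an `a × b` matrix `M` by repeating its `i`-th row
`u i` times and its `j`-th column `v j` times (rows/columns of multiplicity zero are
deleted). -/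
def rep {a b : ℕ} (M : Matrix (Fin a) (Fin b) ℂ) (u : Fin a → ℕ) (v : Fin b → ℕ) :
    Matrix ((i : Fin a) × Fin (u i)) ((j : Fin b) × Fin (v j)) ℂ :=
  fun x y => M x.1 y.1


open Finset

/-- canonical equiv between the fiber of a sigma type and its Fin. -/
def fibEquiv {m : ℕ} (s : Fin m → ℕ) (j : Fin m) :
    {x : (k : Fin m) × Fin (s k) // x.1 = j} ≃ Fin (s j) where
  toFun x := x.2 ▸ x.1.2
  invFun y := ⟨⟨j, y⟩, rfl⟩
  left_inv := by rintro ⟨⟨k, y⟩, h⟩; subst h; rfl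
  right_inv y := rfl

lemma fibEquiv_eq {m : ℕ} (s : Fin m → ℕ) (j : Fin m)
    (x : (k : Fin m) × Fin (s k)) (h : x.1 = j) :
    (⟨j, fibEquiv s j ⟨x, h⟩⟩ : (k : Fin m) × Fin (s k)) = x := by
  rcases x with ⟨k, y⟩; subst h; rfl

/-- Equivs compatible with `g` correspond to families of fiber bijections. -/
def fiberFamilyEquiv {m n : ℕ} (s : Fin m → ℕ) (g : Fin n → Fin m) :
    {f : Fin n ≃ ((j : Fin m) × Fin (s j)) // (fun i => (f i).1) = g} ≃
      ((j : Fin m) → ({i // g i = j} ≃ Fin (s j))) where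
  toFun f j := (Equiv.subtypeEquiv f.1 (fun i => by
      constructor
      · intro h; rw [show (f.1 i).1 = g i from congrFun f.2 i]; exact h
      · intro h; rw [← h]; exact (congrFun f.2 i).symm)).trans (fibEquiv s j)
  invFun F := ⟨(Equiv.sigmaFiberEquiv g).symm.trans (Equiv.sigmaCongrRight F),
    by funext i; rfl⟩
  left_inv := by
    rintro ⟨f, hf⟩
    refine Subtype.ext (Equiv.ext fun i => ?_)
    exact fibEquiv_eq s (g i) (f i) (congrFun hf i)
  right_inv := by
    intro F
    funext j
    ext ⟨i, hi⟩
    subst hi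
    rfl

lemma card_equiv_fin {α : Type*} [Fintype α] [DecidableEq α] (k : ℕ) :
    Fintype.card (α ≃ Fin k) = if Fintype.card α = k then k.factorial else 0 := by
  split_ifs with h
  · rw [Fintype.card_equiv (Fintype.equivFinOfCardEq h), h]
  · rw [Fintype.card_eq_zero_iff]
    exact ⟨fun e => h (by simpa using Fintype.card_congr e)⟩

lemma card_fiber {m n : ℕ} (s : Fin m → ℕ) (g : Fin n → Fin m) :
    Fintype.card {f : Fin n ≃ ((j : Fin m) × Fin (s j)) // (fun i => (f i).1) = g} =
      if ∀ j, Fintype.card {i // g i = j} = s j then ∏ j, (s j).factorial else 0 := by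
  rw [Fintype.card_congr (fiberFamilyEquiv s g), Fintype.card_pi]
  split_ifs with h
  · exact Finset.prod_congr rfl fun j _ => by rw [card_equiv_fin, if_pos (h j)]
  · push_neg at h
    obtain ⟨j, hj⟩ := h
    exact Finset.prod_eq_zero (Finset.mem_univ j) (by rw [card_equiv_fin, if_neg hj])

/-- Sum over equivs of a function depending only on the first components. -/
lemma sum_equiv_fst {m n : ℕ} (s : Fin m → ℕ) (h : (Fin n → Fin m) → ℂ) :
    ∑ f : Fin n ≃ ((j : Fin m) × Fin (s j)), h (fun i => (f i).1) =
      ∑ g : Fin n → Fin m,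
        (if ∀ j, Fintype.card {i // g i = j} = s j then (∏ j, ((s j).factorial : ℂ)) else 0)
          * h g := by
  rw [← Fintype.sum_fiberwise (fun f : Fin n ≃ ((j : Fin m) × Fin (s j)) => (fun i => (f i).1))
    (fun f => h (fun i => (f i).1))]
  refine Finset.sum_congr rfl fun g _ => ?_
  have : ∀ f : {f : Fin n ≃ ((j : Fin m) × Fin (s j)) // (fun i => (f i).1) = g},
      h (fun i => (f.1 i).1) = h g := fun f => congrArg h f.2
  rw [Finset.sum_congr rfl fun f _ => this f, Finset.sum_const, Finset.card_univ, card_fiber]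
  split_ifs with hc
  · rw [nsmul_eq_mul, Nat.cast_prod]
  · simp

noncomputable def tEquiv {m n : ℕ} (hnm : n ≤ m) :
    Fin n ≃ ((i : Fin m) × Fin (if (i : ℕ) < n then 1 else 0)) := by
  refine Equiv.ofBijective (fun i => ⟨Fin.castLE hnm i, ⟨0, by simp [i.isLt]⟩⟩) ?_
  rw [Fintype.bijective_iff_injective_and_card]
  constructor
  · intro i i' h
    exact Fin.castLE_injective hnm (congrArg Sigma.fst h)
  · rw [Fintype.card_sigma]
    simp only [Fintype.card_fin]
    rw [Fin.sum_univ_eq_sum_range (fun i => if i < n then 1 else 0), Finset.sum_boole]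
    have : (Finset.range m).filter (fun i => i < n) = Finset.range n := by
      ext i; simp only [Finset.mem_filter, Finset.mem_range]; omega
    simp [this]

@[simp] lemma tEquiv_fst {m n : ℕ} (hnm : n ≤ m) (i : Fin n) :
    (tEquiv hnm i).1 = Fin.castLE hnm i := rfl

lemma per_rep_row {m n : ℕ} (hnm : n ≤ m) (M : Matrix (Fin m) (Fin m) ℂ) (s : Fin m → ℕ) :
    Per (rep M (fun i => if (i : ℕ) < n then 1 else 0) s)
      = ∑ f : Fin n ≃ ((j : Fin m) × Fin (s j)),
          ∏ i, M (Fin.castLE hnm i) (f i).1 := by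
  rw [Per]
  refine (Fintype.sum_equiv ((tEquiv hnm).equivCongr (Equiv.refl _))
    (fun f => ∏ i, M (Fin.castLE hnm i) (f i).1)
    (fun F => ∏ x, rep M (fun i => if (i : ℕ) < n then 1 else 0) s x (F x))
    (fun f => ?_)).symm
  rw [← Equiv.prod_comp (tEquiv hnm)
    (fun x => rep M (fun i => if (i : ℕ) < n then 1 else 0) s x
      ((((tEquiv hnm).equivCongr (Equiv.refl _)) f) x))]
  refine Finset.prod_congr rfl fun i _ => ?_
  simp [rep, Equiv.equivCongr]

lemma per_rep_col {m n : ℕ} (hnm : n ≤ m) (N : Matrix (Fin m) (Fin m) ℂ) (s : Fin m → ℕ) :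
    Per (rep N s (fun i => if (i : ℕ) < n then 1 else 0))
      = ∑ f : ((j : Fin m) × Fin (s j)) ≃ Fin n,
          ∏ x, N x.1 (Fin.castLE hnm (f x)) := by
  rw [Per]
  refine (Fintype.sum_equiv ((Equiv.refl _).equivCongr (tEquiv hnm))
    (fun f => ∏ x, N x.1 (Fin.castLE hnm (f x)))
    (fun F => ∏ x, rep N s (fun i => if (i : ℕ) < n then 1 else 0) x (F x))
    (fun f => ?_)).symm
  refine Finset.prod_congr rfl fun x _ => ?_
  simp [rep, Equiv.equivCongr]

lemma inner_eq {m n : ℕ} (hnm : n ≤ m) (M N : Matrix (Fin m) (Fin m) ℂ) (s : Fin m → ℕ) :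
    Per (rep M (fun i => if (i : ℕ) < n then 1 else 0) s) *
      Per (rep N s (fun i => if (i : ℕ) < n then 1 else 0)) =
    ∑ g : Fin n → Fin m,
      (if ∀ j, Fintype.card {i // g i = j} = s j then (∏ j, ((s j).factorial : ℂ)) else 0) *
        ∑ σ : Equiv.Perm (Fin n), ∏ i,
          (M (Fin.castLE hnm i) (g i) * N (g i) (Fin.castLE hnm (σ i))) := by
  rw [per_rep_row hnm, per_rep_col hnm, Finset.sum_mul]
  rw [← sum_equiv_fst s (fun g => ∑ σ : Equiv.Perm (Fin n), ∏ i,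
    (M (Fin.castLE hnm i) (g i) * N (g i) (Fin.castLE hnm (σ i))))]
  refine Finset.sum_congr rfl fun f _ => ?_
  have key : (∑ f' : ((j : Fin m) × Fin (s j)) ≃ Fin n, ∏ x, N x.1 (Fin.castLE hnm (f' x)))
      = ∑ σ : Equiv.Perm (Fin n), ∏ i, N (f i).1 (Fin.castLE hnm (σ i)) := by
    refine (Fintype.sum_equiv (f.equivCongr (Equiv.refl (Fin n)))
      (fun σ => ∏ i, N (f i).1 (Fin.castLE hnm (σ i)))
      (fun f' => ∏ x, N x.1 (Fin.castLE hnm (f' x))) fun σ => ?_).symm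
    rw [← Equiv.prod_comp f
      (fun x => N x.1 (Fin.castLE hnm (((f.equivCongr (Equiv.refl (Fin n))) σ) x)))]
    simp [Equiv.equivCongr]
  rw [key, Finset.mul_sum]
  exact Finset.sum_congr rfl fun σ _ => (Finset.prod_mul_distrib).symm

/-- Inner product of Boson Sampling output states as a single permanent (no adaptive
measurements): for `n ≤ m`, `t = (1^n, 0^{m-n})` and `m × m` matrices `M`, `N`,
`∑_{s ∈ Φ_{m,n}} (1/s!) Per(M_{t,s}) Per(N_{s,t}) = Per[(MN)_n]`,
where `(MN)_n` is the `n × n` top-left submatrix of `MN`. -/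
theorem overlap_as_single_permanent (m n : ℕ) (hnm : n ≤ m)
    (M N : Matrix (Fin m) (Fin m) ℂ) :
    ∑ s ∈ Finset.Nat.antidiagonalTuple m n,
        (1 / ∏ i, ((s i).factorial : ℂ)) *
          (Per (rep M (fun i => if (i : ℕ) < n then 1 else 0) s) *
            Per (rep N s (fun i => if (i : ℕ) < n then 1 else 0))) =
      Per ((M * N).submatrix (Fin.castLE hnm) (Fin.castLE hnm)) := by
  set G : (Fin n → Fin m) → ℂ := fun g => ∑ σ : Equiv.Perm (Fin n), ∏ i,
    (M (Fin.castLE hnm i) (g i) * N (g i) (Fin.castLE hnm (σ i))) with hG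
  have lhs_eq : ∑ s ∈ Finset.Nat.antidiagonalTuple m n,
      (1 / ∏ i, ((s i).factorial : ℂ)) *
        (Per (rep M (fun i => if (i : ℕ) < n then 1 else 0) s) *
          Per (rep N s (fun i => if (i : ℕ) < n then 1 else 0))) =
      ∑ g : Fin n → Fin m, G g := by
    have step1 : ∀ s ∈ Finset.Nat.antidiagonalTuple m n,
        (1 / ∏ i, ((s i).factorial : ℂ)) *
          (Per (rep M (fun i => if (i : ℕ) < n then 1 else 0) s) *
            Per (rep N s (fun i => if (i : ℕ) < n then 1 else 0))) =
        ∑ g : Fin n → Fin m,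
          (if s = (fun j => Fintype.card {i // g i = j}) then G g else 0) := by
      intro s _
      rw [inner_eq hnm M N s, Finset.mul_sum]
      refine Finset.sum_congr rfl fun g _ => ?_
      by_cases hcs : ∀ j, Fintype.card {i // g i = j} = s j
      · have hse : s = (fun j => Fintype.card {i // g i = j}) := funext fun j => (hcs j).symm
        rw [if_pos hcs, if_pos hse, ← mul_assoc, one_div_mul_cancel, one_mul]
        exact Finset.prod_ne_zero_iff.mpr fun j _ => Nat.cast_ne_zero.mpr (s j).factorial_ne_zero
      · have hse : ¬ s = (fun j => Fintype.card {i // g i = j}) := fun h => hcs fun j => by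
          rw [h]
        rw [if_neg hcs, if_neg hse, zero_mul, mul_zero]
    rw [Finset.sum_congr rfl step1, Finset.sum_comm]
    refine Finset.sum_congr rfl fun g _ => ?_
    rw [Finset.sum_ite_eq' (Finset.Nat.antidiagonalTuple m n)
      (fun j => Fintype.card {i // g i = j}) (fun _ => G g)]
    rw [if_pos]
    rw [Finset.Nat.mem_antidiagonalTuple]
    rw [← Fintype.card_sigma]
    rw [Fintype.card_congr (Equiv.sigmaFiberEquiv g)]
    exact Fintype.card_fin n
  rw [lhs_eq, Per]
  rw [Finset.sum_comm]
  refine Finset.sum_congr rfl fun σ _ => ?_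
  have : ∀ i : Fin n, (M * N).submatrix (Fin.castLE hnm) (Fin.castLE hnm) i (σ i)
      = ∑ k, M (Fin.castLE hnm i) k * N k (Fin.castLE hnm (σ i)) := fun i => by
    rw [Matrix.submatrix_apply, Matrix.mul_apply]
  rw [Finset.prod_congr rfl fun i _ => this i, Finset.prod_univ_sum]
  rw [Fintype.piFinset_univ]
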